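/- Let p ≥ 5 be a prime and R = 𝔽_p[x,y,z,w]/(x³+y³+z³+w³). Then R is F-pure (F-split): there exists an additive map φ : R → R with φ(1) = 1 and φ(a^p · b) = a · φ(b) for all a, b ∈ R, i.e., the Frobenius endomorphism of R splits as a map of R-modules. -/

import Mathlib

open MvPolynomial

/-- A `k`-linear map `δ : R → R` is a differential operator of order at most `n`:
order `≤ 0` means `δ (r * s) = r * δ s` for all `r s`, and order `≤ n + 1` means all
commutators `[δ, μ_r]` with multiplication operators have order `≤ n`. -/
def IsDiffOpOfOrder (k : Type*) {R : Type*} [CommRing k] [CommRing R] [Algebra k R] :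
    ℕ → (R →ₗ[k] R) → Prop
  | 0 => fun δ => ∀ r s : R, δ (r * s) = r * δ s
  | n + 1 => fun δ => ∀ r : R,
      IsDiffOpOfOrder k n (δ ∘ₗ LinearMap.mulLeft k r - LinearMap.mulLeft k r ∘ₗ δ)

/-- `δ` is homogeneous of degree `e ∈ ℤ` with respect to the grading `𝒜`: it sends
elements of degree `d` to elements of degree `d + e`, interpreted as `0` when `d + e < 0`. -/
def HomogeneousOfDegree {k R : Type*} [CommRing k] [CommRing R] [Algebra k R]
    (𝒜 : ℕ → Submodule k R) (δ : R →ₗ[k] R) (e : ℤ) : Prop :=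
  ∀ (d : ℕ), ∀ r ∈ 𝒜 d,
    (∀ m : ℕ, (m : ℤ) = (d : ℤ) + e → δ r ∈ 𝒜 m) ∧ ((d : ℤ) + e < 0 → δ r = 0)

/-- The grading induced on a quotient of a polynomial ring by a (homogeneous) ideal:
the degree-`d` piece is the image of the degree-`d` homogeneous polynomials. -/
noncomputable def quotGrade {σ : Type*} (k : Type*) [CommRing k]
    (I : Ideal (MvPolynomial σ k)) (d : ℕ) : Submodule k (MvPolynomial σ k ⧸ I) :=
  (MvPolynomial.homogeneousSubmodule σ k d).map (Ideal.Quotient.mkₐ k I).toLinearMap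

/-- `R = 𝔽_p[x,y,z,w]/(x³+y³+z³+w³)`. -/
abbrev RFermat (p : ℕ) : Type :=
  MvPolynomial (Fin 4) (ZMod p) ⧸
    (Ideal.span {X 0 ^ 3 + X 1 ^ 3 + X 2 ^ 3 + X 3 ^ 3} : Ideal (MvPolynomial (Fin 4) (ZMod p)))

/-!
Fedder's criterion. On `S = 𝔽_p[x₁, …, xₙ]` the Frobenius trace `Φ`, sending
`x^(p • m + (p-1, …, p-1))` to `x^m` and every other monomial to `0`, satisfies
`Φ (a^p * g) = a * Φ g`. So `g ↦ Φ (f^(p-1) * w * g)` preserves `(f)`, since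
`f^(p-1) * (s * f) = f^p * s`, and induces a Frobenius splitting of `S ⧸ (f)` once
`Φ (f^(p-1) * w) = 1`. For `f = ∑ xᵢ^d` pick `k` with `|k| = p - 1` and `d * kᵢ ≤ p - 1`, and let
`w` be the monomial completing `x^(d • k)` to `(x₁ ⋯ xₙ)^(p-1)`: by homogeneity
`Φ (f^(p-1) * w)` is the constant multinomial coefficient of `k`, a unit mod `p` since it divides
`(p-1)!`. For `d = 3`, `n = 4`, `p ≥ 5` take `k = (t, t, t, r)` with `p - 1 = 3t + r`, where
`r ≤ 1` because `3 ∤ p`.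
-/

def IsFrobeniusSplit (R : Type*) [CommRing R] (p : ℕ) : Prop :=
  ∃ φ : R →+ R, φ 1 = 1 ∧ ∀ a b : R, φ (a ^ p * b) = a * φ b

theorem isFrobeniusSplit_quotient_span_singleton {S : Type*} [CommRing S] {p : ℕ} (hp : p ≠ 0)
    (ψ : S →+ S) (hψ : ∀ a b, ψ (a ^ p * b) = a * ψ b) (f w : S)
    (hw : ψ (f ^ (p - 1) * w) = 1) : IsFrobeniusSplit (S ⧸ Ideal.span {f}) p := by
  set I := Ideal.span {f}
  let φ₀ : S →+ S ⧸ I := (Ideal.Quotient.mk I).toAddMonoidHom.comp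
    (ψ.comp (AddMonoidHom.mulLeft (f ^ (p - 1) * w)))
  have hφ₀ : ∀ x, φ₀ x = Ideal.Quotient.mk I (ψ (f ^ (p - 1) * w * x)) := fun _ => rfl
  -- `S ⧸ I` is definitionally the additive quotient `S ⧸ I.toAddSubgroup`.
  let φ : S ⧸ I →+ S ⧸ I := QuotientAddGroup.lift I.toAddSubgroup φ₀ (by
    intro x hx
    obtain ⟨s, rfl⟩ := Ideal.mem_span_singleton'.mp hx
    have hfp : f ^ (p - 1) * w * (s * f) = f ^ p * (w * s) := by
      rw [← pow_sub_one_mul hp]; ring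
    rw [AddMonoidHom.mem_ker, hφ₀, hfp, hψ, Ideal.Quotient.eq_zero_iff_mem]
    exact Ideal.mul_mem_right _ _ (Ideal.mem_span_singleton_self f))
  have hφ : ∀ x, φ (Ideal.Quotient.mk I x) = Ideal.Quotient.mk I (ψ (f ^ (p - 1) * w * x)) :=
    fun _ => rfl
  refine ⟨φ, ?_, ?_⟩
  · rw [← map_one (Ideal.Quotient.mk I), hφ, mul_one, hw, map_one]
  · intro a b
    obtain ⟨a, rfl⟩ := Ideal.Quotient.mk_surjective a
    obtain ⟨b, rfl⟩ := Ideal.Quotient.mk_surjective b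
    rw [← map_pow, ← map_mul, hφ, hφ, mul_left_comm, hψ, map_mul]

theorem Finsupp.multinomial_cast_ne_zero {α : Type*} {p : ℕ} [Fact p.Prime] (k : α →₀ ℕ)
    (hk : k.degree < p) : (k.multinomial : ZMod p) ≠ 0 := by
  rw [Ne, ZMod.natCast_eq_zero_iff]
  intro hdvd
  have : p ∣ k.degree.factorial := by
    rw [Finsupp.degree_apply, ← Nat.multinomial_spec]
    exact hdvd.mul_left _
  exact absurd ((Nat.Prime.dvd_factorial Fact.out).mp this) (not_le.mpr hk)

namespace MvPolynomial

variable {σ : Type*}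

section Exponents

variable [Fintype σ] (p : ℕ)

/-- The exponent of `(x₁ ⋯ xₙ)^(p-1)`, which spans the socle of `S ⧸ 𝔪^[p]`. -/
noncomputable def socleExponent : σ →₀ ℕ := Finsupp.equivFunOnFinite.symm fun _ => p - 1

noncomputable def traceExponent (m : σ →₀ ℕ) : σ →₀ ℕ := p • m + socleExponent p

@[simp]
theorem socleExponent_apply (i : σ) : socleExponent p i = p - 1 := rfl

@[simp]
theorem traceExponent_apply (m : σ →₀ ℕ) (i : σ) : traceExponent p m i = p * m i + (p - 1) := rfl

@[simp]
theorem traceExponent_zero : traceExponent p (0 : σ →₀ ℕ) = socleExponent p := by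
  simp [traceExponent]

theorem degree_traceExponent (m : σ →₀ ℕ) :
    (traceExponent p m).degree = p * m.degree + (socleExponent p : σ →₀ ℕ).degree := by
  simp [traceExponent]

variable {p}

theorem traceExponent_injective (hp : p ≠ 0) : Function.Injective (traceExponent (σ := σ) p) :=
  fun m n h => Finsupp.ext fun i => by
    have := DFunLike.congr_fun h i
    simp only [traceExponent_apply] at this
    exact Nat.eq_of_mul_eq_mul_left (Nat.pos_of_ne_zero hp) (by omega)

theorem nsmul_le_traceExponent_iff (hp : p ≠ 0) (m n : σ →₀ ℕ) :
    p • m ≤ traceExponent p n ↔ m ≤ n := by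
  simp only [Finsupp.le_def, Finsupp.smul_apply, smul_eq_mul, traceExponent_apply]
  refine forall_congr' fun i => ⟨fun h => ?_, fun h => (Nat.mul_le_mul_left p h).trans le_self_add⟩
  by_contra! hlt
  have := Nat.mul_le_mul_left p hlt
  rw [Nat.mul_succ] at this
  omega

theorem traceExponent_sub_nsmul {m n : σ →₀ ℕ} (h : m ≤ n) :
    traceExponent p n - p • m = traceExponent p (n - m) := by
  ext i
  simp only [Finsupp.tsub_apply, traceExponent_apply, Finsupp.smul_apply, smul_eq_mul,
    Nat.mul_sub]
  have := Nat.mul_le_mul_left p (h i)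
  omega

end Exponents

section FrobeniusTrace

variable [Fintype σ] (p : ℕ) [NeZero p]

noncomputable def frobeniusTrace : MvPolynomial σ (ZMod p) →ₗ[ZMod p] MvPolynomial σ (ZMod p) where
  toFun g := AddMonoidAlgebra.ofCoeff <| Finsupp.comapDomain (traceExponent p)
    (AddMonoidAlgebra.coeff g) (traceExponent_injective (NeZero.ne p)).injOn
  map_add' g h := by ext m; exact coeff_add (traceExponent p m) g h
  map_smul' a g := by ext m; exact coeff_smul (traceExponent p m) a g

theorem coeff_frobeniusTrace (g : MvPolynomial σ (ZMod p)) (m : σ →₀ ℕ) :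
    coeff m (frobeniusTrace p g) = coeff (traceExponent p m) g := rfl

theorem frobeniusTrace_pow_mul [Fact p.Prime] (a g : MvPolynomial σ (ZMod p)) :
    frobeniusTrace p (a ^ p * g) = a * frobeniusTrace p g := by
  induction a using MvPolynomial.induction_on' with
  | monomial m c =>
    ext n
    rw [monomial_pow, ZMod.pow_card, coeff_frobeniusTrace, coeff_monomial_mul',
      coeff_monomial_mul']
    by_cases hmn : m ≤ n
    · rw [if_pos hmn, if_pos ((nsmul_le_traceExponent_iff (NeZero.ne p) m n).mpr hmn),
        traceExponent_sub_nsmul hmn, coeff_frobeniusTrace]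
    · rw [if_neg hmn, if_neg (mt (nsmul_le_traceExponent_iff (NeZero.ne p) m n).mp hmn)]
  | add a b ha hb =>
    rw [add_pow_char, add_mul, map_add, ha, hb, add_mul]

theorem frobeniusTrace_eq_C_of_isHomogeneous {g : MvPolynomial σ (ZMod p)}
    (hg : g.IsHomogeneous (socleExponent p : σ →₀ ℕ).degree) :
    frobeniusTrace p g = C (coeff (socleExponent p) g) := by
  classical
  ext m
  rw [coeff_frobeniusTrace, coeff_C]
  by_cases hm : m = 0
  · rw [hm, traceExponent_zero, if_pos rfl]
  · rw [if_neg (Ne.symm hm)]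
    refine hg.coeff_eq_zero fun h => hm ?_
    rw [degree_traceExponent, add_eq_right, mul_eq_zero] at h
    exact (Finsupp.degree_eq_zero_iff m).mp (h.resolve_left (NeZero.ne p))

end FrobeniusTrace

theorem coeff_sum_X_pow_pow_degree {R : Type*} [CommSemiring R] [Fintype σ] {d : ℕ} (hd : d ≠ 0)
    (k : σ →₀ ℕ) : coeff (d • k) ((∑ i, X i ^ d : MvPolynomial σ R) ^ k.degree) = k.multinomial := by
  have : (∑ i, X i ^ d : MvPolynomial σ R) = expand d (∑ i, X i) := by simp [map_sum]
  rw [this, ← map_pow, coeff_expand_smul _ hd, coeff_sum_X_pow_of_fintype,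
    if_pos (show (k.sum fun _ m => m) = k.degree from rfl)]

end MvPolynomial

open MvPolynomial in
theorem isFrobeniusSplit_quotient_sum_X_pow {σ : Type*} [Fintype σ] {p : ℕ} [Fact p.Prime]
    {d : ℕ} (hd : d ≠ 0) (k : σ →₀ ℕ) (hk : k.degree = p - 1)
    (hkd : ∀ i, d * k i ≤ p - 1) :
    IsFrobeniusSplit
      (MvPolynomial σ (ZMod p) ⧸ Ideal.span {∑ i, (X i : MvPolynomial σ (ZMod p)) ^ d}) p := by
  set f : MvPolynomial σ (ZMod p) := ∑ i, X i ^ d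
  replace hkd : d • k ≤ socleExponent p := hkd
  set v : MvPolynomial σ (ZMod p) := monomial (socleExponent p - d • k) 1
  have hhom : (f ^ (p - 1) * v).IsHomogeneous (socleExponent p : σ →₀ ℕ).degree := by
    have hf : f.IsHomogeneous d := IsHomogeneous.sum _ _ _ fun i _ => isHomogeneous_X_pow i d
    convert (hf.pow (p - 1)).mul (isHomogeneous_monomial (1 : ZMod p) rfl) using 1
    conv_lhs => rw [← tsub_add_cancel_of_le hkd]
    rw [map_add, map_nsmul, hk, smul_eq_mul, add_comm]
  have hcoeff : coeff (socleExponent p) (f ^ (p - 1) * v) = k.multinomial := by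
    rw [coeff_mul_monomial', if_pos tsub_le_self, tsub_tsub_cancel_of_le hkd, mul_one, ← hk,
      coeff_sum_X_pow_pow_degree hd]
  have hc : (k.multinomial : ZMod p) ≠ 0 :=
    k.multinomial_cast_ne_zero (hk ▸ Nat.sub_lt (NeZero.pos p) one_pos)
  refine isFrobeniusSplit_quotient_span_singleton (NeZero.ne p) (frobeniusTrace p).toAddMonoidHom
    (frobeniusTrace_pow_mul p) f (C (k.multinomial : ZMod p)⁻¹ * v) ?_
  rw [LinearMap.toAddMonoidHom_coe, mul_left_comm, ← smul_eq_C_mul, map_smul,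
    frobeniusTrace_eq_C_of_isHomogeneous p hhom, hcoeff, smul_eq_C_mul, ← C_mul,
    inv_mul_cancel₀ hc, C_1]

/-- for a prime `p ≥ 5`, the ring `R = 𝔽_p[x,y,z,w]/(x³+y³+z³+w³)` is
`F`-pure (`F`-split): there is an additive map `φ : R → R` with `φ 1 = 1` and
`φ (a^p * b) = a * φ b`, i.e. the Frobenius splits as a map of `R`-modules. -/
theorem fermat_cubic_F_pure (p : ℕ) (hp : p.Prime) (hp5 : 5 ≤ p) :
    ∃ φ : RFermat p →+ RFermat p,
      φ 1 = 1 ∧ ∀ a b : RFermat p, φ (a ^ p * b) = a * φ b := by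
  have := Fact.mk hp
  have hr : (p - 1) % 3 ≤ 1 := by
    by_contra! h
    have hp3 := (Nat.prime_dvd_prime_iff_eq Nat.prime_three hp).mp (by omega)
    omega
  let k : Fin 4 →₀ ℕ :=
    Finsupp.equivFunOnFinite.symm ![(p - 1) / 3, (p - 1) / 3, (p - 1) / 3, (p - 1) % 3]
  have hk : k.degree = p - 1 := by
    simp only [k, Finsupp.degree_eq_sum, Fin.sum_univ_four,
      Finsupp.equivFunOnFinite_symm_apply_apply, Matrix.cons_val_zero, Matrix.cons_val_one,
      Matrix.cons_val]
    omega
  have hkd : ∀ i, 3 * k i ≤ p - 1 := by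
    simp only [k, Fin.forall_fin_succ, Finsupp.equivFunOnFinite_symm_apply_apply,
      Matrix.cons_val_zero, Matrix.cons_val_succ, Matrix.cons_val_fin_one, forall_const]
    omega
  have := isFrobeniusSplit_quotient_sum_X_pow three_ne_zero k hk hkd
  rwa [Fin.sum_univ_four] at this
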